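/- Let a, b ∈ ℝ^d be unit vectors with ⟨a, b⟩ = c ≤ 0, and let u, v be unit vectors with ⟨a, u⟩ ≥ δ and ⟨b, v⟩ ≥ δ for some δ ∈ (1/√2, 1], and assume arccos(c) ≥ 2·arccos(δ). Then ⟨u, v⟩ ≤ c·(2δ² − 1) + 2δ√(1 − δ²); in particular ⟨u, v⟩ ≤ 2δ√(1 − δ²) < 1. -/
import Mathlib

open scoped InnerProductSpace

set_option maxHeartbeats 1000000

lemma my_arccos_anti {x y : ℝ} (h : x ≤ y) : Real.arccos y ≤ Real.arccos x := by
  unfold Real.arccos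
  have := Real.monotone_arcsin h
  linarith

/-- Spherical triangle inequality for unit vectors. -/
lemma my_angle_triangle {d : ℕ} (x y z : EuclideanSpace ℝ (Fin d))
    (hx : ‖x‖ = 1) (hy : ‖y‖ = 1) (hz : ‖z‖ = 1) :
    Real.arccos ⟪x, z⟫_ℝ ≤ Real.arccos ⟪x, y⟫_ℝ + Real.arccos ⟪y, z⟫_ℝ := by
  set p := ⟪x, y⟫_ℝ with hp
  set q := ⟪y, z⟫_ℝ with hq
  have hp1 : |p| ≤ 1 := by
    have := abs_real_inner_le_norm x y; rwa [hx, hy, one_mul] at this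
  have hq1 : |q| ≤ 1 := by
    have := abs_real_inner_le_norm y z; rwa [hy, hz, one_mul] at this
  rw [abs_le] at hp1 hq1
  set x' := x - p • y with hx'
  set z' := z - q • y with hz'
  have hyy : ⟪y, y⟫_ℝ = 1 := by
    rw [real_inner_self_eq_norm_sq, hy]; norm_num
  have hxx : ⟪x, x⟫_ℝ = 1 := by
    rw [real_inner_self_eq_norm_sq, hx]; norm_num
  have hzz : ⟪z, z⟫_ℝ = 1 := by
    rw [real_inner_self_eq_norm_sq, hz]; norm_num
  have hyx : ⟪y, x⟫_ℝ = p := by rw [hp, real_inner_comm]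
  have hzy : ⟪z, y⟫_ℝ = q := by rw [hq, real_inner_comm]
  have hxz : ⟪x, z⟫_ℝ = p * q + ⟪x', z'⟫_ℝ := by
    simp only [hx', hz', inner_sub_left, inner_sub_right, real_inner_smul_left,
      real_inner_smul_right, hyy]
    simp only [← hp, ← hq, hyx, hzy]
    ring
  have hnx' : ‖x'‖ ^ 2 = 1 - p ^ 2 := by
    rw [← real_inner_self_eq_norm_sq]
    simp only [hx', inner_sub_left, inner_sub_right, real_inner_smul_left,
      real_inner_smul_right, hyy, hxx]
    simp only [← hp, ← hq, hyx, hzy]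
    ring
  have hnz' : ‖z'‖ ^ 2 = 1 - q ^ 2 := by
    rw [← real_inner_self_eq_norm_sq]
    simp only [hz', inner_sub_left, inner_sub_right, real_inner_smul_left,
      real_inner_smul_right, hyy, hzz]
    simp only [← hp, ← hq, hyx, hzy]
    ring
  have hxn : ‖x'‖ = Real.sqrt (1 - p ^ 2) := by
    rw [← hnx', Real.sqrt_sq (norm_nonneg _)]
  have hzn : ‖z'‖ = Real.sqrt (1 - q ^ 2) := by
    rw [← hnz', Real.sqrt_sq (norm_nonneg _)]
  have hcs : ⟪x', z'⟫_ℝ ≥ -(Real.sqrt (1 - p ^ 2) * Real.sqrt (1 - q ^ 2)) := by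
    have h1 := abs_real_inner_le_norm x' z'
    rw [hxn, hzn] at h1
    linarith [(abs_le.mp h1).1]
  have hcos : Real.cos (Real.arccos p + Real.arccos q) ≤ ⟪x, z⟫_ℝ := by
    rw [Real.cos_add, Real.cos_arccos hp1.1 hp1.2, Real.cos_arccos hq1.1 hq1.2,
      Real.sin_arccos, Real.sin_arccos, hxz]
    linarith
  by_cases hsum : Real.arccos p + Real.arccos q ≤ Real.pi
  · refine le_trans (my_arccos_anti hcos) ?_
    rw [Real.arccos_cos (add_nonneg (Real.arccos_nonneg _) (Real.arccos_nonneg _)) hsum]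
  · have := Real.arccos_le_pi ⟪x, z⟫_ℝ
    linarith

/-- If `a, b` are unit vectors with `⟨a,b⟩ = c ≤ 0`, `u, v` are unit vectors
δ-aligned with `a, b` respectively for `δ ∈ (1/√2, 1]`, and `arccos c ≥ 2·arccos δ`, then
`⟨u,v⟩ ≤ c·(2δ² − 1) + 2δ√(1 − δ²)`, in particular `⟨u,v⟩ ≤ 2δ√(1 − δ²) < 1`. -/
theorem stmt_16 (d : ℕ) (a b u v : EuclideanSpace ℝ (Fin d))
    (ha : ‖a‖ = 1) (hb : ‖b‖ = 1) (hu : ‖u‖ = 1) (hv : ‖v‖ = 1)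
    (c : ℝ) (hab : ⟪a, b⟫_ℝ = c) (hc : c ≤ 0)
    (δ : ℝ) (hδ : δ ∈ Set.Ioc (1 / Real.sqrt 2) 1)
    (hau : ⟪a, u⟫_ℝ ≥ δ) (hbv : ⟪b, v⟫_ℝ ≥ δ)
    (hangle : Real.arccos c ≥ 2 * Real.arccos δ) :
    ⟪u, v⟫_ℝ ≤ c * (2 * δ ^ 2 - 1) + 2 * δ * Real.sqrt (1 - δ ^ 2) ∧
    ⟪u, v⟫_ℝ ≤ 2 * δ * Real.sqrt (1 - δ ^ 2) ∧
    2 * δ * Real.sqrt (1 - δ ^ 2) < 1 := by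
  obtain ⟨hδl, hδr⟩ := hδ
  have hδpos : 0 < δ := lt_trans (by positivity) hδl
  have hδsq : 1 / 2 < δ ^ 2 := by
    have h1 : (1 / Real.sqrt 2) ^ 2 = 1 / 2 := by
      rw [div_pow, Real.sq_sqrt (by norm_num : (0:ℝ) ≤ 2)]; norm_num
    have h2 := pow_lt_pow_left₀ hδl (by positivity : (0:ℝ) ≤ 1 / Real.sqrt 2) two_ne_zero
    rw [h1] at h2; exact h2
  have hs : Real.sqrt (1 - δ ^ 2) ^ 2 = 1 - δ ^ 2 := Real.sq_sqrt (by nlinarith)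
  have hsnn : 0 ≤ Real.sqrt (1 - δ ^ 2) := Real.sqrt_nonneg _
  have hc1 : -1 ≤ c := by
    have h1 := abs_real_inner_le_norm a b
    rw [ha, hb, one_mul, hab] at h1
    linarith [(abs_le.mp h1).1]
  have hc2 : c ≤ 1 := le_trans hc zero_le_one
  have t1 : Real.arccos ⟪a, b⟫_ℝ ≤ Real.arccos ⟪a, u⟫_ℝ + Real.arccos ⟪u, b⟫_ℝ :=
    my_angle_triangle a u b ha hu hb
  have t2 : Real.arccos ⟪u, b⟫_ℝ ≤ Real.arccos ⟪u, v⟫_ℝ + Real.arccos ⟪v, b⟫_ℝ :=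
    my_angle_triangle u v b hu hv hb
  have e1 : Real.arccos ⟪a, u⟫_ℝ ≤ Real.arccos δ := my_arccos_anti hau
  have e2 : Real.arccos ⟪v, b⟫_ℝ ≤ Real.arccos δ := by
    rw [real_inner_comm]; exact my_arccos_anti hbv
  have key : Real.arccos c - 2 * Real.arccos δ ≤ Real.arccos ⟪u, v⟫_ℝ := by
    rw [← hab]; linarith
  have huv1 : |⟪u, v⟫_ℝ| ≤ 1 := by
    have h1 := abs_real_inner_le_norm u v; rwa [hu, hv, one_mul] at h1
  rw [abs_le] at huv1
  have hδ1 : -1 ≤ δ := by linarith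
  have main : ⟪u, v⟫_ℝ ≤ Real.cos (Real.arccos c - 2 * Real.arccos δ) := by
    have hmono := Real.cos_le_cos_of_nonneg_of_le_pi
      (by linarith : (0:ℝ) ≤ Real.arccos c - 2 * Real.arccos δ)
      (Real.arccos_le_pi _) key
    rwa [Real.cos_arccos huv1.1 huv1.2] at hmono
  have expand : Real.cos (Real.arccos c - 2 * Real.arccos δ)
      ≤ c * (2 * δ ^ 2 - 1) + 2 * δ * Real.sqrt (1 - δ ^ 2) := by
    rw [Real.cos_sub, Real.cos_arccos hc1 hc2, Real.cos_two_mul, Real.cos_arccos hδ1 hδr,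
      Real.sin_two_mul, Real.sin_arccos, Real.sin_arccos, Real.cos_arccos hδ1 hδr]
    have hsin1 : Real.sqrt (1 - c ^ 2) ≤ 1 := Real.sqrt_le_one.mpr (by nlinarith : 1 - c ^ 2 ≤ 1)
    have hsin0 : 0 ≤ Real.sqrt (1 - c ^ 2) := Real.sqrt_nonneg _
    have hterm : 0 ≤ 2 * Real.sqrt (1 - δ ^ 2) * δ := by positivity
    nlinarith
  have first : ⟪u, v⟫_ℝ ≤ c * (2 * δ ^ 2 - 1) + 2 * δ * Real.sqrt (1 - δ ^ 2) :=
    le_trans main expand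
  have hcterm : c * (2 * δ ^ 2 - 1) ≤ 0 := by nlinarith
  have third : 2 * δ * Real.sqrt (1 - δ ^ 2) < 1 := by
    have hpos : 0 < 2 * δ ^ 2 - 1 := by linarith
    have hsqeq : (2 * δ * Real.sqrt (1 - δ ^ 2)) ^ 2 = 4 * δ ^ 2 * (1 - δ ^ 2) := by
      rw [mul_pow, mul_pow, hs]; ring
    have hlt : (2 * δ * Real.sqrt (1 - δ ^ 2)) ^ 2 < 1 := by
      rw [hsqeq]; nlinarith [mul_pos hpos hpos]
    have hnn : 0 ≤ 2 * δ * Real.sqrt (1 - δ ^ 2) := by positivity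
    nlinarith [hlt, hnn]
  exact ⟨first, by linarith, third⟩
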